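/- Strict feasibility of the controller QP (key step in the proof of Proposition 4). Assume X_r is compact and nonempty, and that for every (x,u) ∈ X_r there exists q ∈ ℝ^m such that: if b(u) = 0 then ⟨∇b(u), q⟩ > 0, and if h_r(x,u) = 0 then (∂h_r/∂u)(x,u)·q + (∂h_r/∂x)(x,u)·f(x,u) > 0. Then there exist α_f > 0 and γ_f > 0 such that for all α > α_f and all γ > γ_f, for every (x,u) ∈ X_r there exists q ∈ ℝ^m with ⟨∇b(u), q⟩ + α·b(u) > 0 and (∂h_r/∂x)(x,u)·f(x,u) + (∂h_r/∂u)(x,u)·q + γ·h_r(x,u) > 0 (both inequalities strict). -/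

import Mathlib

/-!
Fix `p₀ ∈ X_r` and the input `q` that the hypothesis provides there. The expression
`⟪∇b(u), q⟫ + α b(u)` is positive for all large `α` uniformly near `p₀`: if `b(u₀) = 0`
its first term is already positive near `p₀` and the second is nonnegative on `X_r`, and
if `b(u₀) > 0` the second term dominates. The same holds for the `h_r`-constraint and `γ`.
Compactness of `X_r` turns these local thresholds into global ones.
-/

open Set Filter Topology
open scoped RealInnerProductSpace

noncomputable def hseq {n m : ℕ}
    (f : EuclideanSpace ℝ (Fin n) × EuclideanSpace ℝ (Fin m) → EuclideanSpace ℝ (Fin n))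
    (h : EuclideanSpace ℝ (Fin n) → ℝ) (β : ℝ) :
    ℕ → EuclideanSpace ℝ (Fin n) × EuclideanSpace ℝ (Fin m) → ℝ
  | 0 => fun p => h p.1
  | i + 1 => fun p =>
      fderiv ℝ (fun x => hseq f h β i (x, p.2)) p.1 (f p) + β * hseq f h β i p

noncomputable def Xset {n m : ℕ}
    (f : EuclideanSpace ℝ (Fin n) × EuclideanSpace ℝ (Fin m) → EuclideanSpace ℝ (Fin n))
    (h : EuclideanSpace ℝ (Fin n) → ℝ) (b : EuclideanSpace ℝ (Fin m) → ℝ) (β : ℝ) (i : ℕ) :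
    Set (EuclideanSpace ℝ (Fin n) × EuclideanSpace ℝ (Fin m)) :=
  {p | 0 ≤ h p.1 ∧ 0 ≤ b p.2 ∧ 0 ≤ hseq f h β i p}

section PartialDerivatives

variable {E F G : Type*} [NormedAddCommGroup E] [NormedSpace ℝ E] [NormedAddCommGroup F]
  [NormedSpace ℝ F] [NormedAddCommGroup G] [NormedSpace ℝ G] {g : E × F → G}

lemma fderiv_comp_prodMk_left_apply {x : E} {u : F} (hg : DifferentiableAt ℝ g (x, u)) (v : E) :
    fderiv ℝ (fun y => g (y, u)) x v = fderiv ℝ g (x, u) (v, 0) := by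
  have hcomp : HasFDerivAt (fun y => g (y, u)) ((fderiv ℝ g (x, u)).comp (.inl ℝ E F)) x :=
    hg.hasFDerivAt.comp x (hasFDerivAt_prodMk_left x u)
  rw [hcomp.fderiv]
  rfl

lemma fderiv_comp_prodMk_right_apply {x : E} {u : F} (hg : DifferentiableAt ℝ g (x, u))
    (v : F) : fderiv ℝ (fun y => g (x, y)) u v = fderiv ℝ g (x, u) (0, v) := by
  have hcomp : HasFDerivAt (fun y => g (x, y)) ((fderiv ℝ g (x, u)).comp (.inr ℝ E F)) u :=
    hg.hasFDerivAt.comp u (hasFDerivAt_prodMk_right x u)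
  rw [hcomp.fderiv]
  rfl

lemma ContDiff.continuous_fderiv_comp_prodMk_left_apply (hg : ContDiff ℝ 1 g)
    {v : E × F → E} (hv : Continuous v) :
    Continuous fun p : E × F => fderiv ℝ (fun y => g (y, p.2)) p.1 (v p) := by
  simp_rw [fderiv_comp_prodMk_left_apply (hg.differentiable one_ne_zero _)]
  exact (hg.continuous_fderiv one_ne_zero).clm_apply (hv.prodMk continuous_const)

lemma ContDiff.continuous_fderiv_comp_prodMk_right_apply (hg : ContDiff ℝ 1 g)
    {v : E × F → F} (hv : Continuous v) :
    Continuous fun p : E × F => fderiv ℝ (fun y => g (p.1, y)) p.2 (v p) := by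
  simp_rw [fderiv_comp_prodMk_right_apply (hg.differentiable one_ne_zero _)]
  exact (hg.continuous_fderiv one_ne_zero).clm_apply (continuous_const.prodMk hv)

end PartialDerivatives

section Hseq

variable {n m : ℕ}
  {f : EuclideanSpace ℝ (Fin n) × EuclideanSpace ℝ (Fin m) → EuclideanSpace ℝ (Fin n)}
  {h : EuclideanSpace ℝ (Fin n) → ℝ} {β : ℝ}

lemma hseq_succ_apply {i : ℕ} (hi : Differentiable ℝ (hseq f h β i))
    (p : EuclideanSpace ℝ (Fin n) × EuclideanSpace ℝ (Fin m)) :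
    hseq f h β (i + 1) p = fderiv ℝ (hseq f h β i) p (f p, 0) + β * hseq f h β i p :=
  congrArg (· + β * hseq f h β i p) (fderiv_comp_prodMk_left_apply (hi p) (f p))

lemma contDiff_hseq_succ {i k : ℕ} (hf : ContDiff ℝ k f)
    (hi : ContDiff ℝ (k + 1 : ℕ) (hseq f h β i)) :
    ContDiff ℝ k (hseq f h β (i + 1)) := by
  rw [funext (hseq_succ_apply (hi.differentiable (by simp)))]
  exact ((hi.fderiv_right (by simp)).clm_apply (hf.prodMk contDiff_const)).add
    (contDiff_const.mul (hi.of_le (by simp)))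

lemma contDiff_hseq {i k : ℕ} (hf : ContDiff ℝ (k + i : ℕ) f)
    (hh : ContDiff ℝ (k + i + 1 : ℕ) h) : ContDiff ℝ (k + 1 : ℕ) (hseq f h β i) := by
  induction i generalizing k with
  | zero => exact hh.comp contDiff_fst
  | succ i ih =>
    have hi : ContDiff ℝ (k + 1 + 1 : ℕ) (hseq f h β i) :=
      ih (hf.of_le (by norm_cast; omega)) (hh.of_le (by norm_cast; omega))
    exact contDiff_hseq_succ (hf.of_le (by norm_cast; omega)) hi

end Hseq

lemma eventually_pos_add_mul {P : Type*} [TopologicalSpace P] {g c : P → ℝ} {p₀ : P}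
    (hg : ContinuousAt g p₀) (hc : ContinuousAt c p₀) (hg₀ : 0 ≤ g p₀)
    (hc₀ : g p₀ = 0 → 0 < c p₀) :
    ∀ᶠ z : ℝ × P in atTop ×ˢ 𝓝 p₀, 0 ≤ g z.2 → 0 < c z.2 + z.1 * g z.2 := by
  rcases hg₀.eq_or_lt with hg₀ | hg₀
  · have hcpos : ∀ᶠ z : ℝ × P in atTop ×ˢ 𝓝 p₀, 0 < c z.2 :=
      tendsto_snd.eventually (hc.eventually (lt_mem_nhds (hc₀ hg₀.symm)))
    have hαnonneg : ∀ᶠ z : ℝ × P in atTop ×ˢ 𝓝 p₀, 0 ≤ z.1 :=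
      tendsto_fst.eventually (eventually_ge_atTop 0)
    filter_upwards [hcpos, hαnonneg] with z hcz hαz hgz
    linarith [mul_nonneg hαz hgz]
  · have htends : Tendsto (fun z : ℝ × P => c z.2 + z.1 * g z.2) (atTop ×ˢ 𝓝 p₀) atTop :=
      (hc.tendsto.comp tendsto_snd).add_atTop
        (tendsto_fst.atTop_mul_pos hg₀ (hg.tendsto.comp tendsto_snd))
    filter_upwards [htends.eventually_gt_atTop 0] with z hz _ using hz

lemma IsCompact.eventually_forall_mem_of_eventually_prod {X Y : Type*} [TopologicalSpace Y]
    {K : Set Y} (hK : IsCompact K) {l : Filter X} {P : X → Y → Prop}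
    (hP : ∀ y ∈ K, ∀ᶠ z in l ×ˢ 𝓝 y, z.2 ∈ K → P z.1 z.2) :
    ∀ᶠ x in l, ∀ y ∈ K, P x y :=
  (show ∀ᶠ z in l ×ˢ 𝓝ˢ K, z.2 ∈ K → P z.1 z.2 from
    hK.mem_prod_nhdsSet_of_forall hP).curry.mono fun _ hx y hy => hx.self_of_nhdsSet y hy hy

lemma exists_pos_forall_gt_of_eventually_atTop_prod {Q : ℝ → ℝ → Prop}
    (hQ : ∀ᶠ a : ℝ × ℝ in atTop ×ˢ atTop, Q a.1 a.2) :
    ∃ αf > (0 : ℝ), ∃ γf > (0 : ℝ), ∀ α > αf, ∀ γ > γf, Q α γ := by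
  rw [prod_atTop_atTop_eq] at hQ
  obtain ⟨a, ha⟩ := eventually_atTop_prod_self'.1 hQ
  exact ⟨max a 1, by positivity, max a 1, by positivity,
    fun α hα γ hγ => ha α (le_of_max_le_left hα.le) γ (le_of_max_le_left hγ.le)⟩

theorem qp_strict_feasibility_general
    {n m r : ℕ}
    (f : EuclideanSpace ℝ (Fin n) × EuclideanSpace ℝ (Fin m) → EuclideanSpace ℝ (Fin n))
    (h : EuclideanSpace ℝ (Fin n) → ℝ) (b : EuclideanSpace ℝ (Fin m) → ℝ)
    (hf : ContDiff ℝ (r + 1 : ℕ) f) (hh : ContDiff ℝ (r + 2 : ℕ) h) (hb : ContDiff ℝ 2 b)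
    (β : ℝ)
    (hcomp : IsCompact (Xset f h b β r))
    (hcq : ∀ p ∈ Xset f h b β r, ∃ q : EuclideanSpace ℝ (Fin m),
      (b p.2 = 0 → 0 < ⟪gradient b p.2, q⟫) ∧
      (hseq f h β r p = 0 →
        0 < fderiv ℝ (fun u => hseq f h β r (p.1, u)) p.2 q
          + fderiv ℝ (fun x => hseq f h β r (x, p.2)) p.1 (f p))) :
    ∃ αf > (0 : ℝ), ∃ γf > (0 : ℝ), ∀ α > αf, ∀ γ > γf,
      ∀ p ∈ Xset f h b β r, ∃ q : EuclideanSpace ℝ (Fin m),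
        0 < ⟪gradient b p.2, q⟫ + α * b p.2 ∧
        0 < fderiv ℝ (fun x => hseq f h β r (x, p.2)) p.1 (f p)
          + fderiv ℝ (fun u => hseq f h β r (p.1, u)) p.2 q + γ * hseq f h β r p := by
  have hH : ContDiff ℝ 1 (hseq f h β r) :=
    contDiff_hseq (k := 0) (hf.of_le (by norm_cast; omega)) (hh.of_le (by norm_cast; omega))
  have hb₁ : ContDiff ℝ 1 b := hb.of_le (by simp)
  refine exists_pos_forall_gt_of_eventually_atTop_prod
    (hcomp.eventually_forall_mem_of_eventually_prod fun p₀ hp₀ => ?_)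
  obtain ⟨q, hqb, hqH⟩ := hcq p₀ hp₀
  have hbq : Continuous fun p : EuclideanSpace ℝ (Fin n) × EuclideanSpace ℝ (Fin m) =>
      ⟪gradient b p.2, q⟫ := by
    simp_rw [inner_gradient_left]
    exact ((hb₁.continuous_fderiv one_ne_zero).comp continuous_snd).clm_apply continuous_const
  have hαb := eventually_pos_add_mul (g := fun p => b p.2)
    (hb₁.continuous.comp continuous_snd).continuousAt hbq.continuousAt hp₀.2.1 hqb
  have hγH := eventually_pos_add_mul (g := hseq f h β r)
    (c := fun p => fderiv ℝ (fun x => hseq f h β r (x, p.2)) p.1 (f p)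
      + fderiv ℝ (fun u => hseq f h β r (p.1, u)) p.2 q)
    hH.continuous.continuousAt
    ((hH.continuous_fderiv_comp_prodMk_left_apply hf.continuous).add
      (hH.continuous_fderiv_comp_prodMk_right_apply continuous_const)).continuousAt
    hp₀.2.2 (fun h0 => by linarith [hqH h0])
  filter_upwards [((tendsto_fst.comp tendsto_fst).prodMk tendsto_snd).eventually hαb,
    ((tendsto_snd.comp tendsto_fst).prodMk tendsto_snd).eventually hγH] with z hzα hzγ hz
  exact ⟨q, hzα hz.2.1, hzγ hz.2.2⟩

/-- Strict feasibility of the controller QP (key step in the proof of Proposition 4): under the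
hypotheses of Proposition 3, there exist `α_f, γ_f > 0` such that for all `α > α_f`, `γ > γ_f`,
the controller QP is strictly feasible at every point of `X_r`. -/
theorem qp_strict_feasibility
    {n m r : ℕ} (hn : 0 < n) (hm : 0 < m) (hr : 0 < r)
    (f : EuclideanSpace ℝ (Fin n) × EuclideanSpace ℝ (Fin m) → EuclideanSpace ℝ (Fin n))
    (h : EuclideanSpace ℝ (Fin n) → ℝ) (b : EuclideanSpace ℝ (Fin m) → ℝ)
    (hf : ContDiff ℝ (r + 1 : ℕ) f) (hh : ContDiff ℝ (r + 2 : ℕ) h) (hb : ContDiff ℝ 2 b)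
    (β : ℝ) (hβ : 0 < β)
    (hcomp : IsCompact (Xset f h b β r)) (hne : (Xset f h b β r).Nonempty)
    (hcq : ∀ p ∈ Xset f h b β r, ∃ q : EuclideanSpace ℝ (Fin m),
      (b p.2 = 0 → 0 < ⟪gradient b p.2, q⟫) ∧
      (hseq f h β r p = 0 →
        0 < fderiv ℝ (fun u => hseq f h β r (p.1, u)) p.2 q
          + fderiv ℝ (fun x => hseq f h β r (x, p.2)) p.1 (f p))) :
    ∃ αf > (0 : ℝ), ∃ γf > (0 : ℝ), ∀ α > αf, ∀ γ > γf,
      ∀ p ∈ Xset f h b β r, ∃ q : EuclideanSpace ℝ (Fin m),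
        0 < ⟪gradient b p.2, q⟫ + α * b p.2 ∧
        0 < fderiv ℝ (fun x => hseq f h β r (x, p.2)) p.1 (f p)
          + fderiv ℝ (fun u => hseq f h β r (p.1, u)) p.2 q + γ * hseq f h β r p :=
  qp_strict_feasibility_general f h b hf hh hb β hcomp hcq
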